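/- Let f(x) = ν r x - ν μ x^((ν+1)/ν) - s with r, μ, ν > 0. If 0 < s < (1/μ^ν)·(νr/(ν+1))^(ν+1), then f has exactly two positive roots A and K with 0 < A < K; moreover at the critical value s* = (1/μ^ν)·(νr/(ν+1))^(ν+1) the two roots coalesce at x* = (νr/(μ(ν+1)))^ν, where simultaneously f(x*) = 0 and f'(x*) = 0. -/

import Mathlib

/-!
Write `f(x) = g(x) - s` with `g(x) = a x - b x^p`, `a = ν r`, `b = ν μ`, `p = (ν + 1) / ν > 1`.
Since `g'(x) = a - b p x^(p - 1)` and `x ↦ x^(p - 1)` is strictly increasing, `g` strictly increases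
up to the unique critical point `x* = (ν r / (μ (ν + 1)))^ν` and strictly decreases after it, with
`g(0) = 0`, `g(x*) = s*` and `g → -∞`. So for `0 < s < s*` the intermediate value theorem gives one
root on each side of `x*`, and strict monotonicity on each side rules out any other.
-/

open Real Set Filter

theorem exists_two_preimages_of_strictMonoOn_of_strictAntiOn {f : ℝ → ℝ} {m s : ℝ} (hm : 0 ≤ m)
    (hf : ContinuousOn f (Ici 0)) (hmono : StrictMonoOn f (Icc 0 m))
    (hanti : StrictAntiOn f (Ici m)) (htop : Tendsto f atTop atBot) (hs0 : f 0 < s)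
    (hsm : s < f m) :
    ∃ A K : ℝ, 0 < A ∧ A < K ∧ f A = s ∧ f K = s ∧
      ∀ x : ℝ, 0 < x → f x = s → x = A ∨ x = K := by
  obtain ⟨A, ⟨hA0, hAm⟩, hfA⟩ :=
    intermediate_value_Ioo hm (hf.mono Icc_subset_Ici_self) ⟨hs0, hsm⟩
  obtain ⟨c, hfc, hmc⟩ := ((htop.eventually_lt_atBot s).and (eventually_ge_atTop m)).exists
  obtain ⟨K, ⟨hmK, -⟩, hfK⟩ :=
    intermediate_value_Ioo' hmc (hf.mono (Icc_subset_Ici_iff hmc |>.mpr hm)) ⟨hfc, hsm⟩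
  refine ⟨A, K, hA0, hAm.trans hmK, hfA, hfK, fun x hx hfx => ?_⟩
  rcases le_or_gt x m with hxm | hmx
  · exact .inl <| hmono.injOn ⟨hx.le, hxm⟩ ⟨hA0.le, hAm.le⟩ (hfx.trans hfA.symm)
  · exact .inr <| hanti.injOn hmx.le hmK.le (hfx.trans hfK.symm)

section PowerGap

variable {a b p : ℝ}

theorem hasDerivAt_mul_sub_mul_rpow (hp : 1 ≤ p) (x : ℝ) :
    HasDerivAt (fun x : ℝ => a * x - b * x ^ p) (a - b * p * x ^ (p - 1)) x :=
  (((hasDerivAt_id' x).const_mul a).sub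
    ((hasDerivAt_rpow_const (Or.inr hp)).const_mul b)).congr_deriv (by ring)

theorem continuous_mul_sub_mul_rpow (hp : 1 ≤ p) : Continuous fun x : ℝ => a * x - b * x ^ p :=
  continuous_iff_continuousAt.mpr fun x => (hasDerivAt_mul_sub_mul_rpow hp x).continuousAt

theorem strictMonoOn_mul_sub_mul_rpow {m : ℝ} (hb : 0 < b) (hp : 1 < p)
    (hm : b * p * m ^ (p - 1) = a) : StrictMonoOn (fun x : ℝ => a * x - b * x ^ p) (Icc 0 m) := by
  refine strictMonoOn_of_deriv_pos (convex_Icc 0 m)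
    (continuous_mul_sub_mul_rpow hp.le).continuousOn fun x hx => ?_
  rw [interior_Icc] at hx
  have hpow : x ^ (p - 1) < m ^ (p - 1) := rpow_lt_rpow hx.1.le hx.2 (by linarith)
  rw [(hasDerivAt_mul_sub_mul_rpow hp.le x).deriv, ← hm, sub_pos]
  gcongr

theorem strictAntiOn_mul_sub_mul_rpow {m : ℝ} (hm0 : 0 ≤ m) (hb : 0 < b) (hp : 1 < p)
    (hm : b * p * m ^ (p - 1) = a) : StrictAntiOn (fun x : ℝ => a * x - b * x ^ p) (Ici m) := by
  refine strictAntiOn_of_deriv_neg (convex_Ici m)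
    (continuous_mul_sub_mul_rpow hp.le).continuousOn fun x hx => ?_
  rw [interior_Ici] at hx
  have hpow : m ^ (p - 1) < x ^ (p - 1) := rpow_lt_rpow hm0 hx (by linarith)
  rw [(hasDerivAt_mul_sub_mul_rpow hp.le x).deriv, ← hm, sub_neg]
  gcongr

theorem tendsto_mul_sub_mul_rpow_atBot (hb : 0 < b) (hp : 1 < p) :
    Tendsto (fun x : ℝ => a * x - b * x ^ p) atTop atBot := by
  have hfactor : Tendsto (fun x : ℝ => a - b * x ^ (p - 1)) atTop atBot :=
    tendsto_atBot_add_const_left _ a <| tendsto_neg_atTop_atBot.comp <|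
      (tendsto_rpow_atTop (by linarith)).const_mul_atTop hb
  refine (tendsto_id.atTop_mul_atBot₀ hfactor).congr' ?_
  filter_upwards [eventually_gt_atTop 0] with x hx
  rw [id, rpow_sub_one hx.ne']
  field_simp

end PowerGap

section Model2

variable {r μ ν : ℝ}

theorem model2_exponent_sub_one (hν : 0 < ν) : (ν + 1) / ν - 1 = ν⁻¹ := by
  field_simp
  ring

theorem model2_critical_point (hr : 0 < r) (hμ : 0 < μ) (hν : 0 < ν) :
    ν * μ * ((ν + 1) / ν) * ((ν * r / (μ * (ν + 1))) ^ ν) ^ ((ν + 1) / ν - 1) = ν * r := by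
  rw [model2_exponent_sub_one hν, rpow_rpow_inv (by positivity) hν.ne']
  field_simp

theorem model2_critical_value (hr : 0 < r) (hμ : 0 < μ) (hν : 0 < ν) :
    ν * r * (ν * r / (μ * (ν + 1))) ^ ν - ν * μ * ((ν * r / (μ * (ν + 1))) ^ ν) ^ ((ν + 1) / ν)
      = (1 / μ ^ ν) * (ν * r / (ν + 1)) ^ (ν + 1) := by
  have hq : 0 < ν * r / (ν + 1) := by positivity
  have hm : (ν * r / (μ * (ν + 1))) ^ ν = (ν * r / (ν + 1)) ^ ν / μ ^ ν := by
    rw [← div_rpow hq.le hμ.le]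
    field_simp
  have hsplit : ((ν + 1) / ν) = 1 + ν⁻¹ := by field_simp
  rw [hsplit, rpow_add (by positivity), rpow_one, rpow_rpow_inv (by positivity) hν.ne', hm,
    rpow_add hq, rpow_one]
  field_simp
  ring

end Model2

theorem model2_two_roots_and_fold (r μ ν : ℝ) (hr : 0 < r) (hμ : 0 < μ) (hν : 0 < ν) :
    (∀ s : ℝ, 0 < s → s < (1 / μ ^ ν) * (ν * r / (ν + 1)) ^ (ν + 1) →
      ∃ A K : ℝ, 0 < A ∧ A < K ∧
        ν * r * A - ν * μ * A ^ ((ν + 1) / ν) - s = 0 ∧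
        ν * r * K - ν * μ * K ^ ((ν + 1) / ν) - s = 0 ∧
        ∀ x : ℝ, 0 < x → ν * r * x - ν * μ * x ^ ((ν + 1) / ν) - s = 0 → x = A ∨ x = K) ∧
    (ν * r * (ν * r / (μ * (ν + 1))) ^ ν
        - ν * μ * ((ν * r / (μ * (ν + 1))) ^ ν) ^ ((ν + 1) / ν)
        - (1 / μ ^ ν) * (ν * r / (ν + 1)) ^ (ν + 1) = 0 ∧
      HasDerivAt
        (fun x : ℝ => ν * r * x - ν * μ * x ^ ((ν + 1) / ν)
          - (1 / μ ^ ν) * (ν * r / (ν + 1)) ^ (ν + 1))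
        0 ((ν * r / (μ * (ν + 1))) ^ ν)) := by
  have hb : 0 < ν * μ := by positivity
  have hp : 1 < (ν + 1) / ν := by rw [lt_div_iff₀ hν]; linarith
  have hm0 : 0 ≤ (ν * r / (μ * (ν + 1))) ^ ν := by positivity
  have hcrit := model2_critical_point hr hμ hν
  have hval := model2_critical_value hr hμ hν
  refine ⟨fun s hs hss => ?_, sub_eq_zero.mpr hval, ?_⟩
  · simp_rw [sub_eq_zero]
    refine exists_two_preimages_of_strictMonoOn_of_strictAntiOn hm0
      (continuous_mul_sub_mul_rpow hp.le).continuousOn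
      (strictMonoOn_mul_sub_mul_rpow hb hp hcrit) (strictAntiOn_mul_sub_mul_rpow hm0 hb hp hcrit)
      (tendsto_mul_sub_mul_rpow_atBot hb hp) ?_ (hval ▸ hss)
    simpa [zero_rpow (zero_lt_one.trans hp).ne'] using hs
  · exact ((hasDerivAt_mul_sub_mul_rpow hp.le _).sub_const _).congr_deriv (by rw [hcrit, sub_self])
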